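/- arXiv:2104.04266 — 3 statements merged into one kernel-verified Lean document; each statement's English description precedes it below -/
import Mathlib

section
/- If a graph G has a spanning subgraph H that is a bipartite cactus, then G is prism-hamiltonian. -/
open SimpleGraph

/-- A set of vertices `B` is a *block* of `G` if the induced subgraph on `B` is connected,
has no cutvertex, and `B` is maximal with these properties. -/
def SimpleGraph.IsBlock {V : Type*} (G : SimpleGraph V) (B : Set V) : Prop :=
  (G.induce B).Connected ∧ (∀ v ∈ B, (G.induce (B \ {v})).Preconnected) ∧
  ∀ B' : Set V, B ⊆ B' → (G.induce B').Connected →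
    (∀ v ∈ B', (G.induce (B' \ {v})).Preconnected) → B' = B

/-- The induced subgraph on `B` is a cycle. -/
def SimpleGraph.IsCycleSet {V : Type*} (G : SimpleGraph V) (B : Set V) : Prop :=
  ∃ (v : V) (c : G.Walk v v), c.IsCycle ∧ {w | w ∈ c.support} = B ∧
    ∀ u w, u ∈ B → w ∈ B → G.Adj u w → s(u, w) ∈ c.edges

/-- A cactus: a connected graph each of whose blocks is an edge (`K₂`) or a cycle,
and in which every vertex lies in at most two blocks. -/
def SimpleGraph.IsCactus {V : Type*} (G : SimpleGraph V) : Prop :=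
  G.Connected ∧
  (∀ B, G.IsBlock B → (∃ u w, G.Adj u w ∧ B = {u, w}) ∨ G.IsCycleSet B) ∧
  ∀ v : V, ∀ B₁ ∈ {B | G.IsBlock B ∧ v ∈ B}, ∀ B₂ ∈ {B | G.IsBlock B ∧ v ∈ B},
    ∀ B₃ ∈ {B | G.IsBlock B ∧ v ∈ B}, B₁ = B₂ ∨ B₁ = B₃ ∨ B₂ = B₃

namespace PrismCactus

open SimpleGraph Walk
open Fin.NatCast
open Fin.CommRing

variable {V : Type*} [DecidableEq V]
set_option linter.unusedSectionVars false

/-- Reachability via a walk confined to the set `s`. -/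
def Reach (H : SimpleGraph V) (s : Set V) (a b : V) : Prop :=
  ∃ p : H.Walk a b, ∀ x ∈ p.support, x ∈ s

/-- Preconnectedness of the induced graph, in walk form. -/
def Pre (H : SimpleGraph V) (s : Set V) : Prop :=
  ∀ a ∈ s, ∀ b ∈ s, Reach H s a b

/-- Connectedness of the induced graph, in walk form. -/
def Conn (H : SimpleGraph V) (s : Set V) : Prop := s.Nonempty ∧ Pre H s

variable {H : SimpleGraph V} {s t B : Set V} {a b c x y : V}

lemma Reach.mem_left (h : Reach H s a b) : a ∈ s := by
  obtain ⟨p, hp⟩ := h; exact hp _ p.start_mem_support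

lemma Reach.mem_right (h : Reach H s a b) : b ∈ s := by
  obtain ⟨p, hp⟩ := h; exact hp _ p.end_mem_support

lemma reach_refl (ha : a ∈ s) : Reach H s a a :=
  ⟨Walk.nil, by simpa using ha⟩

lemma Reach.symm (h : Reach H s a b) : Reach H s b a := by
  obtain ⟨p, hp⟩ := h
  exact ⟨p.reverse, by simpa [Walk.support_reverse] using hp⟩

lemma Reach.trans (h : Reach H s a b) (h' : Reach H s b c) : Reach H s a c := by
  obtain ⟨p, hp⟩ := h; obtain ⟨q, hq⟩ := h'
  refine ⟨p.append q, ?_⟩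
  intro z hz
  rcases (Walk.mem_support_append_iff _ _).1 hz with h | h
  · exact hp _ h
  · exact hq _ h

lemma Reach.mono (hst : s ⊆ t) (h : Reach H s a b) : Reach H t a b := by
  obtain ⟨p, hp⟩ := h; exact ⟨p, fun z hz => hst (hp z hz)⟩

lemma reach_of_adj (h : H.Adj a b) (ha : a ∈ s) (hb : b ∈ s) : Reach H s a b :=
  ⟨Walk.cons h Walk.nil, by simp [ha, hb]⟩

/-- Every vertex of a walk witnessing reachability is reachable. -/
lemma reach_of_mem_support {p : H.Walk a b} (hp : ∀ z ∈ p.support, z ∈ s)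
    (hc : c ∈ p.support) : Reach H s a c := by
  refine ⟨p.takeUntil c hc, fun z hz => hp _ (p.support_takeUntil_subset hc hz)⟩

/-! ### Bridge lemmas between the subtype formulation and the walk formulation -/

lemma pre_iff_preconnected_induce :
    Pre H s ↔ (H.induce s).Preconnected := by
  constructor
  · intro h
    have : ((⊤ : H.Subgraph).induce s).Preconnected := by
      rw [Subgraph.preconnected_iff_forall_exists_walk_subgraph]
      intro u v hu hv
      obtain ⟨p, hp⟩ := h u hu v hv
      refine ⟨p, le_trans p.toSubgraph_le_induce_support ?_⟩
      exact Subgraph.induce_mono le_rfl hp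
    rw [Subgraph.preconnected_iff] at this
    rw [induce_eq_coe_induce_top]
    exact this
  · intro h
    rw [induce_eq_coe_induce_top] at h
    have h' : ((⊤ : H.Subgraph).induce s).Preconnected := (Subgraph.preconnected_iff).2 h
    rw [Subgraph.preconnected_iff_forall_exists_walk_subgraph] at h'
    intro u hu v hv
    obtain ⟨p, hp⟩ := h' hu hv
    refine ⟨p, fun z hz => ?_⟩
    have := hp.1
    simp only [Walk.verts_toSubgraph, Subgraph.induce_verts] at this
    exact this hz

lemma conn_iff_connected_induce :
    Conn H s ↔ (H.induce s).Connected := by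
  rw [connected_iff, ← pre_iff_preconnected_induce]
  constructor
  · rintro ⟨hne, hp⟩; exact ⟨hp, Set.nonempty_coe_sort.2 hne⟩
  · rintro ⟨hp, hne⟩; exact ⟨Set.nonempty_coe_sort.1 hne, hp⟩

/-! ### Blocks and cacti, walk formulation -/

/-- `B` is a block of the induced graph on `s`, walk formulation. -/
def Blk (H : SimpleGraph V) (s B : Set V) : Prop :=
  B ⊆ s ∧ Conn H B ∧ (∀ v ∈ B, Pre H (B \ {v})) ∧
  ∀ B' : Set V, B' ⊆ s → B ⊆ B' → Conn H B' → (∀ v ∈ B', Pre H (B' \ {v})) → B' = B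

/-- Cactus property for the induced graph on `s`, walk formulation. -/
def Cac (H : SimpleGraph V) (s : Set V) : Prop :=
  Conn H s ∧
  (∀ B, Blk H s B → (∃ u w, H.Adj u w ∧ B = {u, w}) ∨ H.IsCycleSet B) ∧
  ∀ v B₁ B₂ B₃, Blk H s B₁ → v ∈ B₁ → Blk H s B₂ → v ∈ B₂ → Blk H s B₃ → v ∈ B₃ →
    B₁ = B₂ ∨ B₁ = B₃ ∨ B₂ = B₃

lemma isBlock_iff_blk_univ {B : Set V} : H.IsBlock B ↔ Blk H Set.univ B := by
  unfold SimpleGraph.IsBlock Blk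
  constructor
  · rintro ⟨h1, h2, h3⟩
    refine ⟨Set.subset_univ _, conn_iff_connected_induce.2 h1,
      fun v hv => pre_iff_preconnected_induce.2 (h2 v hv), ?_⟩
    intro B' _ hBB' hconn hpre
    exact h3 B' hBB' (conn_iff_connected_induce.1 hconn)
      (fun v hv => pre_iff_preconnected_induce.1 (hpre v hv))
  · rintro ⟨_, h1, h2, h3⟩
    refine ⟨conn_iff_connected_induce.1 h1,
      fun v hv => pre_iff_preconnected_induce.1 (h2 v hv), ?_⟩
    intro B' hBB' hconn hpre
    exact h3 B' (Set.subset_univ _) hBB' (conn_iff_connected_induce.2 hconn)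
      (fun v hv => pre_iff_preconnected_induce.2 (hpre v hv))

lemma IsCactus.cac_univ (h : H.IsCactus) : Cac H Set.univ := by
  obtain ⟨h1, h2, h3⟩ := h
  refine ⟨?_, ?_, ?_⟩
  · refine ⟨⟨h1.nonempty.some, trivial⟩, fun a _ b _ => ?_⟩
    exact (h1.preconnected a b).elim fun p => ⟨p, fun z _ => trivial⟩
  · intro B hB
    exact h2 B (isBlock_iff_blk_univ.2 hB)
  · intro v B₁ B₂ B₃ hB₁ hv₁ hB₂ hv₂ hB₃ hv₃
    exact h3 v B₁ ⟨isBlock_iff_blk_univ.2 hB₁, hv₁⟩ B₂ ⟨isBlock_iff_blk_univ.2 hB₂, hv₂⟩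
      B₃ ⟨isBlock_iff_blk_univ.2 hB₃, hv₃⟩

/-! ### Small helper lemmas -/

lemma pre_of_subsingleton (h : ∀ a ∈ s, ∀ b ∈ s, a = b) : Pre H s := by
  intro a ha b hb
  have : a = b := h a ha b hb
  subst this; exact reach_refl ha

lemma conn_pair (hxy : H.Adj x y) : Conn H {x, y} := by
  refine ⟨⟨x, by simp⟩, ?_⟩
  intro a ha b hb
  simp only [Set.mem_insert_iff, Set.mem_singleton_iff] at ha hb
  have hx : (x : V) ∈ ({x, y} : Set V) := by simp
  have hy : (y : V) ∈ ({x, y} : Set V) := by simp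
  rcases ha with rfl | rfl <;> rcases hb with rfl | rfl
  · exact reach_refl hx
  · exact reach_of_adj hxy hx hy
  · exact (reach_of_adj hxy hx hy).symm
  · exact reach_refl hy

lemma pre_pair_diff {v : V} (hv : v ∈ ({x, y} : Set V)) :
    Pre H (({x, y} : Set V) \ {v}) := by
  apply pre_of_subsingleton
  intro a ha b hb
  simp only [Set.mem_diff, Set.mem_insert_iff, Set.mem_singleton_iff] at ha hb hv
  rcases hv with rfl | rfl
  · rcases ha.1 with rfl | rfl
    · exact absurd rfl ha.2
    · rcases hb.1 with rfl | rfl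
      · exact absurd rfl hb.2
      · rfl
  · rcases ha.1 with rfl | rfl
    · rcases hb.1 with rfl | rfl
      · rfl
      · exact absurd rfl hb.2
    · exact absurd rfl ha.2

/-- Existence of blocks through a given edge. -/
lemma exists_blk [Fintype V] (hx : x ∈ s) (hy : y ∈ s) (hadj : H.Adj x y) :
    ∃ B, Blk H s B ∧ x ∈ B ∧ y ∈ B := by
  classical
  set F : Set (Set V) :=
    {B | B ⊆ s ∧ x ∈ B ∧ y ∈ B ∧ Conn H B ∧ ∀ v ∈ B, Pre H (B \ {v})} with hF
  have hfin : F.Finite := Set.toFinite F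
  have hne : F.Nonempty := by
    refine ⟨{x, y}, ?_, by simp, by simp, conn_pair hadj, ?_⟩
    · intro z hz
      simp only [Set.mem_insert_iff, Set.mem_singleton_iff] at hz
      rcases hz with rfl | rfl <;> assumption
    · intro v hv
      exact pre_pair_diff hv
  obtain ⟨B, hBF, hmax⟩ : ∃ B ∈ F, ∀ B' ∈ F, B ≤ B' → B = B' := by
    obtain ⟨B, hB⟩ := Set.Finite.exists_maximal hfin hne
    exact ⟨B, hB.1, fun B' h1 h2 => le_antisymm h2 (hB.2 h1 h2)⟩
  obtain ⟨hBs, hxB, hyB, hBconn, hBpre⟩ := hBF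
  refine ⟨B, ⟨hBs, hBconn, hBpre, ?_⟩, hxB, hyB⟩
  intro B' hB's hBB' hB'conn hB'pre
  have hB'F : B' ∈ F := ⟨hB's, hBB' hxB, hBB' hyB, hB'conn, hB'pre⟩
  exact (hmax B' hB'F hBB').symm

/-- A block is never a singleton when its vertex has a neighbour in `s`. -/
lemma blk_not_singleton [Fintype V] (hB : Blk H s B) (hxy : H.Adj x y) (hy : y ∈ s)
    (hBx : B = {x}) : False := by
  have hx : x ∈ s := hB.1 (hBx ▸ rfl)
  have := hB.2.2.2 {x, y} (by
      intro z hz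
      simp only [Set.mem_insert_iff, Set.mem_singleton_iff] at hz
      rcases hz with rfl | rfl <;> assumption)
    (by rw [hBx]; simp) (conn_pair hxy) (fun v hv => pre_pair_diff hv)
  rw [hBx] at this
  have : y ∈ ({x} : Set V) := this ▸ (by simp : y ∈ ({x, y} : Set V))
  simp only [Set.mem_singleton_iff] at this
  exact hxy.ne' this

section Generic
set_option linter.unusedSectionVars false
variable {W : Type*} {P : SimpleGraph W}

/-- Walks through a cut vertex can be confined to one side. -/
lemma walk_confine {A B : Set W} {x : W} (hx : x ∈ A)
    (hAB : ∀ ⦃a b⦄, a ∈ A → b ∈ B → P.Adj a b → a = x ∨ b = x)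
    (hABi : ∀ ⦃z⦄, z ∈ A → z ∈ B → z = x)
    {u v : W} (p : P.Walk u v) (hsupp : ∀ z ∈ p.support, z ∈ A ∪ B)
    (hu : u ∈ A) (hv : v ∈ A) : ∃ q : P.Walk u v, ∀ z ∈ q.support, z ∈ A := by
  classical
  set R : Set W := {z | ∃ q : P.Walk u z, ∀ y ∈ q.support, y ∈ A} with hR
  have hR_ext : ∀ z c, z ∈ R → P.Adj z c → c ∈ A → c ∈ R := by
    rintro z c ⟨q, hq⟩ hzc hc
    refine ⟨q.concat hzc, ?_⟩
    intro y hy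
    rw [Walk.support_concat] at hy
    rcases List.mem_append.1 hy with h | h
    · exact hq y h
    · simp only [List.mem_singleton] at h; subst h; exact hc
  have aux : ∀ (w v' : W) (p' : P.Walk w v'), (∀ z ∈ p'.support, z ∈ A ∪ B) →
      (w ∈ A → w ∈ R) → (w ∈ B → x ∈ R) → v' ∈ A → v' ∈ R := by
    intro w v' p'
    induction p' with
    | nil => intro _ h1 _ hv'; exact h1 hv'
    | @cons w c v' h q ih =>
      intro hs h1 h2 hv'
      have hw : w ∈ A ∪ B := hs w (by simp)
      have hcAB : c ∈ A ∪ B := hs c (by simp)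
      have new1 : c ∈ A → c ∈ R := by
        intro hc
        by_cases hwA : w ∈ A
        · exact hR_ext w c (h1 hwA) h hc
        · have hwB : w ∈ B := hw.resolve_left hwA
          rcases hAB hc hwB h.symm with hcx | hwx
          · rw [hcx]; exact h2 hwB
          · exact absurd (hwx ▸ hx) hwA
      have new2 : c ∈ B → x ∈ R := by
        intro hc
        by_cases hcA : c ∈ A
        · exact (hABi hcA hc) ▸ new1 hcA
        · by_cases hwA : w ∈ A
          · rcases hAB hwA hc h with hwx | hcx
            · exact hwx ▸ h1 hwA
            · exact absurd (hcx ▸ hx) hcA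
          · exact h2 (hw.resolve_left hwA)
      exact ih (fun z hz => hs z (by simp [hz])) new1 new2 hv'
  have huR : u ∈ R := ⟨Walk.nil, by simpa using hu⟩
  have hv' : v ∈ R := aux u v p hsupp (fun _ => huR) (fun huB => (hABi hu huB) ▸ huR) hv
  exact hv'

/-- In a 2-colorable graph, a walk between vertices has even length iff colors agree. -/
lemma coloring_walk_parity (C : P.Coloring (Fin 2)) {u v : W} (p : P.Walk u v) :
    C u = C v ↔ Even p.length := by
  induction p with
  | nil => simp
  | @cons u c v h q ih =>
    have hne : C u ≠ C c := C.valid h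
    have key : ∀ a b d : Fin 2, a ≠ b → ((a = d) ↔ ¬(b = d)) := by decide
    simp only [Walk.length_cons, Nat.even_add_one, ← ih]
    exact key _ _ _ hne

variable [DecidableEq W]

lemma end_mem_support_tail_of_closed {v : W} {c : P.Walk v v} (hc : c ≠ Walk.nil) {y : W} :
    y ∈ c.support ↔ y ∈ c.support.tail := by
  cases c with
  | nil => exact absurd rfl hc
  | cons h q =>
    simp only [Walk.support_cons, List.tail_cons]
    constructor
    · rintro hy
      rcases List.mem_cons.1 hy with rfl | hy
      · exact q.end_mem_support
      · exact hy
    · intro hy; exact List.mem_cons_of_mem _ hy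

lemma edge_eq_first_of_start_mem {α d : W} {r : P.Walk α d}
    (hr : r.support.Nodup) {e : Sym2 W} (he : e ∈ r.edges) (hα : α ∈ e) :
    ∃ (β : W) (hadj : P.Adj α β) (r' : P.Walk β d), r = Walk.cons hadj r' ∧ e = s(α, β) := by
  cases r with
  | nil => simp at he
  | @cons _ c _ h r' =>
    simp only [Walk.edges_cons, List.mem_cons] at he
    rcases he with rfl | he
    · exact ⟨c, h, r', rfl, rfl⟩
    · exfalso
      obtain ⟨z, rfl⟩ := Sym2.mem_iff_exists.1 hα
      have : α ∈ r'.support := r'.fst_mem_support_of_mem_edges he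
      simp only [Walk.support_cons, List.nodup_cons] at hr
      exact hr.1 this


end Generic
section Generic
variable {W : Type*} {P : SimpleGraph W}

lemma end_mem_support_tail_of_closed' {v : W} {c : P.Walk v v} (hc : c ≠ Walk.nil) {y : W} :
    y ∈ c.support ↔ y ∈ c.support.tail := by
  cases c with
  | nil => exact absurd rfl hc
  | cons h q =>
    simp only [Walk.support_cons, List.tail_cons]
    constructor
    · rintro hy
      rcases List.mem_cons.1 hy with rfl | hy
      · exact q.end_mem_support
      · exact hy
    · intro hy; exact List.mem_cons_of_mem _ hy

lemma edge_eq_first_of_start_mem' {α d : W} {r : P.Walk α d}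
    (hr : r.support.Nodup) {e : Sym2 W} (he : e ∈ r.edges) (hα : α ∈ e) :
    ∃ (β : W) (hadj : P.Adj α β) (r' : P.Walk β d), r = Walk.cons hadj r' ∧ e = s(α, β) := by
  cases r with
  | nil => simp at he
  | @cons _ c _ h r' =>
    simp only [Walk.edges_cons, List.mem_cons] at he
    rcases he with rfl | he
    · exact ⟨c, h, r', rfl, rfl⟩
    · exfalso
      obtain ⟨z, rfl⟩ := Sym2.mem_iff_exists.1 hα
      have : α ∈ r'.support := r'.fst_mem_support_of_mem_edges he
      simp only [Walk.support_cons, List.nodup_cons] at hr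
      exact hr.1 this

variable [DecidableEq W]

/-- From a cycle containing edge `s(α,β)`, extract a hamiltonian-on-its-support path
from `β` to `α` using exactly the other edges. -/
lemma exists_hamPath_of_cycle_edge {a α β : W}
    {p : P.Walk a a} (hp : p.IsCycle) (he : s(α, β) ∈ p.edges) :
    ∃ q : P.Walk β α, q.IsPath ∧ (∀ y, y ∈ q.support ↔ y ∈ p.support) ∧
      (∀ f, f ∈ q.edges ↔ f ∈ p.edges ∧ f ≠ s(α, β)) := by
  classical
  have hαβ : P.Adj α β := p.adj_of_mem_edges he
  have hα : α ∈ p.support := p.fst_mem_support_of_mem_edges he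
  set p' : P.Walk α α := p.rotate α hα with hp'def
  have hp' : p'.IsCycle := hp.rotate hα
  have hmemsup : ∀ y, y ∈ p'.support ↔ y ∈ p.support := by
    intro y
    rw [end_mem_support_tail_of_closed' hp'.ne_nil, end_mem_support_tail_of_closed' hp.ne_nil]
    exact (support_rotate p α hα).mem_iff
  have hmemedge : ∀ f, f ∈ p'.edges ↔ f ∈ p.edges := fun f => (rotate_edges p α hα).mem_iff
  have he' : s(α, β) ∈ p'.edges := (hmemedge _).2 he
  -- decompose p'
  cases hP : p' with
  | nil => rw [hP] at hp'; exact absurd rfl hp'.ne_nil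
  | @cons _ d _ h₁ t =>
    rw [hP] at hp' he' hmemsup hmemedge
    have htsupnd : t.support.Nodup := by
      have := hp'.support_nodup
      simpa using this
    have httrail : t.IsTrail := hp'.isTrail.of_cons
    have hednd : ((Walk.cons h₁ t).edges : List (Sym2 W)).Nodup := hp'.isTrail.edges_nodup
    simp only [Walk.edges_cons, List.nodup_cons] at hednd
    simp only [Walk.edges_cons, List.mem_cons] at he'
    rcases he' with hfirst | hrest
    · -- s(α,d) = s(α,β), so d = β
      have hd : d = β := by
        rcases Sym2.eq_iff.1 hfirst with ⟨-, h2⟩ | ⟨h1', h2'⟩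
        · exact h2.symm
        · exact absurd h2' hαβ.ne'
      subst hd
      refine ⟨t, ⟨httrail, htsupnd⟩, ?_, ?_⟩
      · intro y
        rw [← hmemsup y]
        simp only [Walk.support_cons, List.mem_cons]
        constructor
        · intro hy; exact Or.inr hy
        · rintro (rfl | hy)
          · exact t.end_mem_support
          · exact hy
      · intro f
        constructor
        · intro hf
          refine ⟨(hmemedge f).1 (by simp [hf]), ?_⟩
          rintro rfl
          exact hednd.1 (hfirst ▸ hf)
        · rintro ⟨hf, hne⟩
          rcases (List.mem_cons).1 ((hmemedge f).2 hf) with rfl | hf'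
          · exact absurd hfirst.symm hne
          · exact hf'
    · -- s(α,β) is an edge of t; use t.reverse
      have hrsup : t.reverse.support.Nodup := by
        rw [Walk.support_reverse]; exact List.nodup_reverse.2 htsupnd
      have hre : s(α, β) ∈ t.reverse.edges := by
        rw [Walk.edges_reverse]; exact List.mem_reverse.2 hrest
      obtain ⟨β₂, hadj, r', hdec, hedge⟩ :=
        edge_eq_first_of_start_mem' hrsup hre (Sym2.mem_mk_left _ _)
      have hβ₂ : β₂ = β := by
        rcases Sym2.eq_iff.1 hedge with ⟨-, h2⟩ | ⟨h1', h2'⟩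
        · exact h2.symm
        · exact absurd h2'.symm hαβ.ne
      subst hβ₂
      -- q := r'.concat h₁.symm : Walk β α
      refine ⟨r'.concat h₁.symm, ?_, ?_, ?_⟩
      · apply Walk.IsPath.mk'
        rw [Walk.support_concat]
        have : t.reverse.support = α :: r'.support := by rw [hdec]; simp
        have hnd : (α :: r'.support).Nodup := this ▸ hrsup
        simp only [List.nodup_cons] at hnd
        apply List.Nodup.append hnd.2 (by simp)
        intro z hz
        simp only [List.mem_singleton]
        rintro rfl
        exact hnd.1 hz
      · intro y
        have hsupp_eq : t.reverse.support = α :: r'.support := by rw [hdec]; simp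
        have hy1 : (y ∈ t.support) ↔ (y = α ∨ y ∈ r'.support) := by
          rw [show (y ∈ t.support) ↔ y ∈ t.reverse.support by
            rw [Walk.support_reverse]; exact (List.mem_reverse).symm, hsupp_eq]
          simp
        rw [← hmemsup y]
        simp only [Walk.support_concat, List.mem_append,
          List.mem_singleton, Walk.support_cons, List.mem_cons]
        rw [hy1]
        tauto
      · intro f
        have hredge : t.reverse.edges = s(α, β₂) :: r'.edges := by rw [hdec]; simp
        have htedges : ∀ g, g ∈ t.edges ↔ (g = s(α, β₂) ∨ g ∈ r'.edges) := by
          intro g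
          rw [show (g ∈ t.edges) ↔ g ∈ t.reverse.edges by
            rw [Walk.edges_reverse]; exact (List.mem_reverse).symm, hredge]
          simp
        have hrnd : (s(α, β₂) :: r'.edges).Nodup := by
          rw [← hredge, Walk.edges_reverse]
          exact List.nodup_reverse.2 httrail.edges_nodup
        simp only [List.nodup_cons] at hrnd
        rw [Walk.edges_concat, List.concat_eq_append]
        simp only [List.mem_append, List.mem_singleton]
        constructor
        · rintro (hf | rfl)
          · refine ⟨(hmemedge f).1 (by rw [Walk.edges_cons]; exact List.mem_cons_of_mem _ ((htedges f).2 (Or.inr hf))), ?_⟩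
            rintro rfl
            exact hrnd.1 hf
          · refine ⟨(hmemedge _).1 (by simp [Sym2.eq_swap]), ?_⟩
            intro hcontra
            apply hednd.1
            rw [Sym2.eq_swap] at hcontra
            rw [hcontra]
            exact hrest
        · rintro ⟨hf, hne⟩
          rcases (List.mem_cons).1 ((hmemedge f).2 hf) with rfl | hf'
          · right; exact Sym2.eq_swap
          · left
            rcases (htedges f).1 hf' with rfl | hf''
            · exact absurd rfl hne
            · exact hf''


end Generic
lemma fin2_cases (j : Fin 2) : j = 0 ∨ j = 1 := by omega

variable {V : Type*} {H : SimpleGraph V}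

/-- The prism over `H`. -/
abbrev Pr (H : SimpleGraph V) : SimpleGraph (V × Fin 2) := H □ (⊤ : SimpleGraph (Fin 2))

lemma pr_adj_vert (x : V) (i : Fin 2) : (Pr H).Adj (x, i) (x, i + 1) :=
  boxProd_adj_right.2 (by rcases fin2_cases i with rfl | rfl <;> decide)

lemma pr_adj_horiz {x y : V} (h : H.Adj x y) (i : Fin 2) : (Pr H).Adj (x, i) (y, i) :=
  boxProd_adj_left.2 h

lemma vert_edge_eq (x : V) (i : Fin 2) :
    s((x, i), (x, i + 1)) = s((x, (0 : Fin 2)), (x, 1)) := by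
  rcases fin2_cases i with rfl | rfl
  · rfl
  · show s((x, 1), (x, 0)) = _
    exact Sym2.eq_swap

/-- Lift a walk in `H` to an alternating walk in the prism. -/
def lift : ∀ {u v : V} (p : H.Walk u v) (i : Fin 2),
    (Pr H).Walk (u, i) (v, i + (p.length : Fin 2))
  | _, _, Walk.nil, _ => Walk.nil.copy rfl (by simp)
  | _, _, Walk.cons h q, i =>
      (Walk.cons (pr_adj_vert _ i) (Walk.cons (pr_adj_horiz h (i + 1)) (lift q (i + 1)))).copy
        rfl (by
          rw [Walk.length_cons]
          congr 1
          push_cast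
          ring)

lemma lift_support_fst : ∀ {u v : V} (p : H.Walk u v) (i : Fin 2) (y : V × Fin 2),
    y ∈ (lift p i).support → y.1 ∈ p.support
  | _, _, Walk.nil, i, y => by
      intro hy
      simp only [lift, Walk.support_copy, Walk.support_nil, List.mem_singleton] at hy
      subst hy; exact Walk.start_mem_support _
  | _, _, Walk.cons h q, i, y => by
      intro hy
      simp only [lift, Walk.support_copy, Walk.support_cons, List.mem_cons] at hy
      rcases hy with rfl | rfl | hy
      · exact Walk.start_mem_support _
      · exact Walk.start_mem_support _
      · exact List.mem_cons_of_mem _ (lift_support_fst q (i + 1) y hy)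

lemma lift_support_end_layer : ∀ {u v : V} (p : H.Walk u v) (i : Fin 2)
    (_ : p.support.Nodup) (j : Fin 2), (v, j) ∈ (lift p i).support → j = i + (p.length : Fin 2)
  | _, _, Walk.nil, i, _, j => by
      simp only [lift, Walk.support_copy, Walk.support_nil, List.mem_singleton, Prod.mk.injEq]
      rintro ⟨-, rfl⟩; simp
  | _, _, Walk.cons (v := c) h q, i, hnd, j => by
      simp only [Walk.support_cons, List.nodup_cons] at hnd
      simp only [lift, Walk.support_copy, Walk.support_cons, List.mem_cons, Prod.mk.injEq]
      have hvq : _ ∈ q.support := q.end_mem_support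
      rintro (⟨rfl, rfl⟩ | ⟨rfl, rfl⟩ | hy)
      · exact absurd hvq hnd.1
      · exact absurd hvq hnd.1
      · have := lift_support_end_layer q (i + 1) hnd.2 j hy
        rw [this, Walk.length_cons]
        push_cast
        ring

lemma lift_isPath : ∀ {u v : V} (p : H.Walk u v) (i : Fin 2)
    (_ : p.support.Nodup), (lift p i).IsPath
  | _, _, Walk.nil, i, _ => by simp only [lift]; exact (Walk.isPath_copy _ _ _).2 Walk.IsPath.nil
  | _, _, Walk.cons h q, i, hnd => by
      simp only [Walk.support_cons, List.nodup_cons] at hnd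
      simp only [lift, Walk.isPath_copy]
      rw [Walk.cons_isPath_iff, Walk.cons_isPath_iff]
      refine ⟨⟨lift_isPath q (i + 1) hnd.2, ?_⟩, ?_⟩
      · intro hmem
        exact hnd.1 (lift_support_fst q (i + 1) _ hmem)
      · simp only [Walk.support_cons, List.mem_cons]
        rintro (h' | h')
        · exact (pr_adj_vert (H := H) _ i).ne h'
        · exact hnd.1 (lift_support_fst q (i + 1) _ h')

lemma lift_vert_mem_edges : ∀ {u v : V} (p : H.Walk u v) (i : Fin 2) (x : V)
    (_ : x ∈ p.support) (_ : x ≠ v), s((x, (0 : Fin 2)), (x, 1)) ∈ (lift p i).edges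
  | _, _, Walk.nil, i, x, hx, hne => by
      simp only [Walk.support_nil, List.mem_singleton] at hx
      exact absurd hx hne
  | _, _, Walk.cons h q, i, x, hx, hne => by
      simp only [Walk.support_cons, List.mem_cons] at hx
      simp only [lift, Walk.edges_copy, Walk.edges_cons, List.mem_cons]
      rcases hx with rfl | hx
      · exact Or.inl (vert_edge_eq x i).symm
      · exact Or.inr (Or.inr (lift_vert_mem_edges q (i + 1) x hx hne))

/-- The prism over an even cycle has a hamiltonian cycle through all vertical edges. -/
lemma lift_cycle {v : V} (c : H.Walk v v) (hc : c.IsCycle) (heven : Even c.length) :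
    ∃ p : (Pr H).Walk (v, 0) (v, 0), p.IsCycle ∧
      (∀ y : V × Fin 2, y ∈ p.support ↔ y.1 ∈ c.support) ∧
      ∀ x ∈ c.support, s((x, (0 : Fin 2)), (x, 1)) ∈ p.edges := by
  classical
  cases c with
  | nil => exact absurd rfl hc.ne_nil
  | @cons _ c' _ h q =>
    have hqnd : q.support.Nodup := by
      have := hc.support_nodup
      simpa using this
    have hqlen : (q.length : Fin 2) = 1 := by
      rw [Walk.length_cons] at heven
      have hodd : ¬ Even q.length := Nat.even_add_one.mp heven
      obtain ⟨k, hk⟩ := Nat.not_even_iff_odd.mp hodd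
      rw [hk]
      push_cast
      simp
    have hvq : v ∈ q.support := q.end_mem_support
    -- the lifted path on q, re-typed to end at (v, 0)
    have hend : (1 : Fin 2) + (q.length : Fin 2) = 0 := by rw [hqlen]; decide
    set L : (Pr H).Walk (c', 1) (v, 0) := (lift q 1).copy rfl (by rw [hend]) with hL
    have hLpath : L.IsPath := by rw [hL]; simpa using lift_isPath q 1 hqnd
    have hLsupp : ∀ y : V × Fin 2, y ∈ L.support → y.1 ∈ q.support := by
      intro y hy; rw [hL, Walk.support_copy] at hy; exact lift_support_fst q 1 y hy
    have hLv1 : ((v, 1) : V × Fin 2) ∉ L.support := by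
      intro hmem
      rw [hL, Walk.support_copy] at hmem
      have := lift_support_end_layer q 1 hqnd 1 hmem
      rw [hend] at this
      exact one_ne_zero this
    set p : (Pr H).Walk (v, 0) (v, 0) :=
      Walk.cons (pr_adj_vert v 0) (Walk.cons (pr_adj_horiz h 1) L) with hp
    refine ⟨p, ?_, ?_, ?_⟩
    · rw [hp, Walk.cons_isCycle_iff]
      constructor
      · rw [Walk.cons_isPath_iff]
        exact ⟨hLpath, hLv1⟩
      · simp only [Walk.edges_cons, List.mem_cons]
        push_neg
        constructor
        · intro hcontra
          rcases Sym2.eq_iff.1 hcontra with ⟨h1, -⟩ | ⟨h1, -⟩ <;>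
            exact absurd (congrArg Prod.snd h1) (by simp)
        · intro hmem
          exact hLv1 (L.snd_mem_support_of_mem_edges (by rwa [Sym2.eq_swap] at hmem))
    · intro y
      constructor
      · intro hy
        rw [hp] at hy
        simp only [Walk.support_cons, List.mem_cons] at hy
        rcases hy with rfl | rfl | hy
        · exact Walk.start_mem_support _
        · exact Walk.start_mem_support _
        · exact List.mem_cons_of_mem _ (hLsupp y hy)
      · intro hy
        rw [hp]
        simp only [Walk.support_cons, List.mem_cons]
        obtain ⟨y1, y2⟩ := y
        simp only [Walk.support_cons, List.mem_cons] at hy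
        rcases hy with rfl | hy1
        · rcases fin2_cases y2 with rfl | rfl
          · exact Or.inl rfl
          · exact Or.inr (Or.inl rfl)
        · by_cases hyv : y1 = v
          · subst hyv
            rcases fin2_cases y2 with rfl | rfl
            · exact Or.inl rfl
            · exact Or.inr (Or.inl rfl)
          · have hve : s((y1, (0 : Fin 2)), (y1, 1)) ∈ L.edges := by
              rw [hL, Walk.edges_copy]
              exact lift_vert_mem_edges q 1 y1 hy1 hyv
            have h0 : ((y1, (0 : Fin 2)) : V × Fin 2) ∈ L.support :=
              L.fst_mem_support_of_mem_edges hve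
            have h1' : ((y1, (1 : Fin 2)) : V × Fin 2) ∈ L.support :=
              L.snd_mem_support_of_mem_edges hve
            rcases fin2_cases y2 with rfl | rfl
            · exact Or.inr (Or.inr h0)
            · exact Or.inr (Or.inr h1')
    · intro x hx
      rw [hp]
      simp only [Walk.edges_cons, List.mem_cons]
      rw [Walk.support_cons] at hx
      rw [List.mem_cons] at hx
      by_cases hxv : x = v
      · subst hxv; exact Or.inl rfl
      · rcases hx with rfl | hx
        · exact absurd rfl hxv
        · refine Or.inr (Or.inr ?_)
          rw [hL, Walk.edges_copy]
          exact lift_vert_mem_edges q 1 x hx hxv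



lemma pr_adj_vert' (x : V) : (Pr H).Adj (x, 0) (x, 1) :=
  boxProd_adj_right.2 (by decide)

lemma pr_adj_horiz' {x y : V} (h : H.Adj x y) (i : Fin 2) : (Pr H).Adj (x, i) (y, i) :=
  boxProd_adj_left.2 h

/-- Hamiltonian cycle of the prism over a single edge. -/
lemma square_cycle {u w : V} (huw : H.Adj u w) :
    ∃ p : (Pr H).Walk (u, 0) (u, 0), p.IsCycle ∧
      (∀ y : V × Fin 2, y ∈ p.support ↔ (y.1 = u ∨ y.1 = w)) ∧
      s((u, (0 : Fin 2)), (u, 1)) ∈ p.edges ∧ s((w, (0 : Fin 2)), (w, 1)) ∈ p.edges := by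
  have hne : u ≠ w := huw.ne
  refine ⟨Walk.cons (pr_adj_vert' u) (Walk.cons (pr_adj_horiz' huw 1)
    (Walk.cons ((pr_adj_vert' w).symm) (Walk.cons (pr_adj_horiz' huw.symm 0) Walk.nil))),
    ?_, ?_, ?_, ?_⟩
  · rw [Walk.cons_isCycle_iff]
    constructor
    · apply Walk.IsPath.mk'
      simp only [Walk.support_cons, Walk.support_nil]
      simp [List.nodup_cons, Prod.ext_iff, hne, hne.symm]
    · simp only [Walk.edges_cons, Walk.edges_nil, List.mem_cons, List.not_mem_nil]
      push_neg
      refine ⟨?_, ?_, ?_, by simp⟩ <;>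
        · intro hcontra
          rcases Sym2.eq_iff.1 hcontra with ⟨h1, h2⟩ | ⟨h1, h2⟩ <;>
            simp_all [Prod.ext_iff]
  · intro y
    obtain ⟨y1, y2⟩ := y
    simp only [Walk.support_cons, Walk.support_nil, List.mem_cons, List.not_mem_nil, or_false,
      Prod.mk.injEq]
    constructor
    · rintro (⟨rfl, -⟩ | ⟨rfl, -⟩ | ⟨rfl, -⟩ | ⟨rfl, -⟩ | ⟨rfl, -⟩)
      · exact Or.inl rfl
      · exact Or.inl rfl
      · exact Or.inr rfl
      · exact Or.inr rfl
      · exact Or.inl rfl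
    · rintro (rfl | rfl)
      · rcases fin2_cases y2 with rfl | rfl
        · exact Or.inl ⟨rfl, rfl⟩
        · exact Or.inr (Or.inl ⟨rfl, rfl⟩)
      · rcases fin2_cases y2 with rfl | rfl
        · exact Or.inr (Or.inr (Or.inr (Or.inl ⟨rfl, rfl⟩)))
        · exact Or.inr (Or.inr (Or.inl ⟨rfl, rfl⟩))
  · simp
  · simp only [Walk.edges_cons, List.mem_cons]
    refine Or.inr (Or.inr (Or.inl ?_))
    exact Sym2.eq_swap

/-- Splice two prism cycles sharing exactly the two copies of `x`, both containing
the vertical edge at `x`. -/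
lemma splice {x : V} {a₁ a₂ : V × Fin 2} {p₁ : (Pr H).Walk a₁ a₁} {p₂ : (Pr H).Walk a₂ a₂}
    [DecidableEq V]
    (h₁ : p₁.IsCycle) (h₂ : p₂.IsCycle) {s₁ s₂ : Set V}
    (hs₁ : ∀ y : V × Fin 2, y ∈ p₁.support ↔ y.1 ∈ s₁)
    (hs₂ : ∀ y : V × Fin 2, y ∈ p₂.support ↔ y.1 ∈ s₂)
    (hint : ∀ z, z ∈ s₁ → z ∈ s₂ → z = x)
    (he₁ : s((x, (0 : Fin 2)), (x, 1)) ∈ p₁.edges)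
    (he₂ : s((x, (0 : Fin 2)), (x, 1)) ∈ p₂.edges) :
    ∃ p : (Pr H).Walk (x, 0) (x, 0), p.IsCycle ∧
      (∀ y : V × Fin 2, y ∈ p.support ↔ (y.1 ∈ s₁ ∨ y.1 ∈ s₂)) ∧
      (∀ f, f ∈ p₁.edges → f ≠ s((x, (0 : Fin 2)), (x, 1)) → f ∈ p.edges) ∧
      (∀ f, f ∈ p₂.edges → f ≠ s((x, (0 : Fin 2)), (x, 1)) → f ∈ p.edges) := by
  classical
  obtain ⟨q₁, hq₁path, hq₁supp, hq₁edges⟩ := exists_hamPath_of_cycle_edge h₁ he₁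
  obtain ⟨q₂, hq₂path, hq₂supp, hq₂edges⟩ := exists_hamPath_of_cycle_edge h₂ he₂
  set r₁ : (Pr H).Walk ((x, 0) : V × Fin 2) ((x, 1) : V × Fin 2) := q₁.reverse with hr₁
  have hr₁path : r₁.IsPath := hq₁path.reverse
  have hr₁supp : ∀ y, y ∈ r₁.support ↔ y ∈ p₁.support := by
    intro y
    rw [hr₁, Walk.support_reverse, List.mem_reverse]
    exact hq₁supp y
  have hr₁edges : ∀ f, f ∈ r₁.edges ↔ (f ∈ p₁.edges ∧ f ≠ s((x, (0 : Fin 2)), (x, 1))) := by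
    intro f
    rw [hr₁, Walk.edges_reverse, List.mem_reverse]
    exact hq₁edges f
  set p : (Pr H).Walk ((x, 0) : V × Fin 2) ((x, 0) : V × Fin 2) := r₁.append q₂ with hpdef
  have hsupp : ∀ y, y ∈ p.support ↔ (y.1 ∈ s₁ ∨ y.1 ∈ s₂) := by
    intro y
    rw [hpdef, Walk.mem_support_append_iff]
    rw [hr₁supp, hq₂supp, hs₁, hs₂]
  have hxy2 : ∀ y : V × Fin 2, y.1 = x → y = ((x, 0) : V × Fin 2) ∨ y = ((x, 1) : V × Fin 2) := by
    rintro ⟨y1, y2⟩ rfl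
    rcases fin2_cases y2 with rfl | rfl
    · exact Or.inl rfl
    · exact Or.inr rfl
  have hcross_supp : ∀ y : V × Fin 2, y ∈ r₁.support → y ∈ q₂.support →
      y = ((x, 0) : V × Fin 2) ∨ y = ((x, 1) : V × Fin 2) := by
    intro y hy1 hy2
    apply hxy2
    exact hint _ ((hs₁ y).1 ((hr₁supp y).1 hy1)) ((hs₂ y).1 ((hq₂supp y).1 hy2))
  refine ⟨p, ⟨⟨⟨?_⟩, ?_⟩, ?_⟩, hsupp, ?_, ?_⟩
  · -- edges nodup
    rw [hpdef, Walk.edges_append]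
    apply List.Nodup.append hr₁path.isTrail.edges_nodup hq₂path.isTrail.edges_nodup
    intro f hf1 hf2
    have hf1' := (hr₁edges f).1 hf1
    have hf2' := (hq₂edges f).1 hf2
    -- endpoints of f lie in both supports
    induction f with
    | h c d =>
      have hc1 : c ∈ r₁.support := r₁.fst_mem_support_of_mem_edges hf1
      have hd1 : d ∈ r₁.support := r₁.snd_mem_support_of_mem_edges hf1
      have hc2 : c ∈ q₂.support := q₂.fst_mem_support_of_mem_edges hf2
      have hd2 : d ∈ q₂.support := q₂.snd_mem_support_of_mem_edges hf2
      have hcd : c ≠ d := (r₁.adj_of_mem_edges hf1).ne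
      rcases hcross_supp c hc1 hc2 with rfl | rfl <;>
        rcases hcross_supp d hd1 hd2 with rfl | rfl
      · exact hcd rfl
      · exact hf1'.2 rfl
      · exact hf1'.2 Sym2.eq_swap
      · exact hcd rfl
  · -- ne nil
    intro hnil
    have hlen := congrArg Walk.length hnil
    rw [hpdef, Walk.length_append] at hlen
    simp only [Walk.length_nil] at hlen
    have : q₂.length = 0 := by omega
    have := Walk.eq_of_length_eq_zero this
    exact absurd (congrArg Prod.snd this) (by simp)
  · -- support tail nodup
    rw [hpdef, Walk.tail_support_append]
    apply List.Nodup.append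
    · exact hr₁path.support_nodup.tail
    · exact hq₂path.support_nodup.tail
    · intro y hy1 hy2
      have hy1' : y ∈ r₁.support := List.mem_of_mem_tail hy1
      have hy2' : y ∈ q₂.support := List.mem_of_mem_tail hy2
      rcases hcross_supp y hy1' hy2' with rfl | rfl
      · have : r₁.support = (x, 0) :: r₁.support.tail := r₁.support_eq_cons
        have hnd := hr₁path.support_nodup
        rw [this] at hnd
        exact (List.nodup_cons.1 hnd).1 hy1
      · have : q₂.support = (x, 1) :: q₂.support.tail := q₂.support_eq_cons
        have hnd := hq₂path.support_nodup
        rw [this] at hnd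
        exact (List.nodup_cons.1 hnd).1 hy2
  · intro f hf hne
    rw [hpdef, Walk.edges_append, List.mem_append]
    exact Or.inl ((hr₁edges f).2 ⟨hf, hne⟩)
  · intro f hf hne
    rw [hpdef, Walk.edges_append, List.mem_append]
    exact Or.inr ((hq₂edges f).2 ⟨hf, hne⟩)



/-! ### Cut-vertex splitting -/

variable [Fintype V] [DecidableEq V]

/-- Every vertex of `s \ {x}` can reach, within `s \ {x}`, a neighbour of `x`. -/
lemma nbr_class {s : Set V} {x : V} (hconn : Conn H s) (hxs : x ∈ s) {w : V}
    (hw : w ∈ s \ {x}) : ∃ y, H.Adj x y ∧ y ∈ s \ {x} ∧ Reach H (s \ {x}) w y := by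
  obtain ⟨p, hp⟩ := hconn.2 w hw.1 x hxs
  have hxp : x ∈ p.support := p.end_mem_support
  have hqsupp : ∀ z ∈ (p.takeUntil x hxp).support, z ∈ s :=
    fun z hz => hp z (p.support_takeUntil_subset hxp hz)
  have hcount : (p.takeUntil x hxp).support.count x = 1 := p.count_support_takeUntil_eq_one hxp
  set q := p.takeUntil x hxp with hqdef
  cases hr : q.reverse with
  | nil => exact absurd rfl hw.2
  | @cons _ y _ hadj r' =>
    have hsupp_eq : q.support.reverse = x :: r'.support := by
      have := congrArg Walk.support hr
      rw [Walk.support_reverse] at this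
      rw [this]
      simp
    have hxnot : x ∉ r'.support := by
      have h1 : q.support.reverse.count x = 1 := by rw [List.count_reverse]; exact hcount
      rw [hsupp_eq] at h1
      simp only [List.count_cons_self] at h1
      have : r'.support.count x = 0 := by omega
      exact List.count_eq_zero.1 this
    have hr'mem : ∀ z ∈ r'.support, z ∈ s \ {x} := by
      intro z hz
      have hzq : z ∈ q.support := by
        rw [← List.mem_reverse, hsupp_eq]
        exact List.mem_cons_of_mem _ hz
      refine ⟨hqsupp z hzq, ?_⟩
      intro hzx
      rw [Set.mem_singleton_iff] at hzx
      subst hzx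
      exact hxnot hz
    have hy : y ∈ s \ {x} := hr'mem y r'.start_mem_support
    refine ⟨y, hadj, hy, ⟨r'.reverse, ?_⟩⟩
    intro z hz
    rw [Walk.support_reverse, List.mem_reverse] at hz
    exact hr'mem z hz

/-- The key properties of one side of a cut vertex. -/
lemma side_props {s : Set V} {x a : V} (hcac : Cac H s) (hxs : x ∈ s)
    (ha : a ∈ s \ {x}) (K : Set V)
    (hK : K = {z | z ∈ s \ {x} ∧ Reach H (s \ {x}) a z}) :
    a ∈ K ∧ K ⊆ s \ {x} ∧ Pre H K ∧ Conn H (K ∪ {x}) ∧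
      (∀ B, Blk H (K ∪ {x}) B → Blk H s B) ∧ Cac H (K ∪ {x}) := by
  have hKmem : ∀ z, z ∈ K ↔ (z ∈ s \ {x} ∧ Reach H (s \ {x}) a z) := by
    intro z; rw [hK]; rfl
  have haK : a ∈ K := (hKmem a).2 ⟨ha, reach_refl ha⟩
  have hKsub : K ⊆ s \ {x} := fun z hz => ((hKmem z).1 hz).1
  have hxK : x ∉ K := fun hx => ((hKmem x).1 hx).1.2 rfl
  have hKreach : ∀ {z w : V}, z ∈ K → Reach H (s \ {x}) z w → w ∈ K := by
    intro z w hz hr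
    exact (hKmem w).2 ⟨hr.mem_right, (((hKmem z).1 hz).2).trans hr⟩
  have hKwalk : ∀ {z w : V}, z ∈ K → Reach H (s \ {x}) z w → Reach H K z w := by
    rintro z w hz ⟨p, hp⟩
    exact ⟨p, fun u hu => hKreach hz (reach_of_mem_support hp hu)⟩
  have hPreK : Pre H K := by
    intro z hz w hw
    exact hKwalk hz ((((hKmem z).1 hz).2.symm).trans ((hKmem w).1 hw).2)
  have hKxs : K ∪ {x} ⊆ s := by
    intro z hz
    rcases hz with hz | hz
    · exact (hKsub hz).1
    · rw [Set.mem_singleton_iff] at hz; subst hz; exact hxs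
  have hxKx : x ∈ K ∪ {x} := Or.inr rfl
  have hreach_to_x : ∀ z ∈ K, Reach H (K ∪ {x}) z x := by
    intro z hz
    obtain ⟨y, hadj, hy, hry⟩ := nbr_class hcac.1 hxs (hKsub hz)
    have hyK : y ∈ K := hKreach hz hry
    have h1 : Reach H (K ∪ {x}) z y := (hKwalk hz hry).mono Set.subset_union_left
    exact h1.trans (reach_of_adj hadj.symm (Or.inl hyK) hxKx)
  have hConnKx : Conn H (K ∪ {x}) := by
    refine ⟨⟨x, hxKx⟩, ?_⟩
    have hto : ∀ z ∈ K ∪ {x}, Reach H (K ∪ {x}) z x := by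
      intro z hz
      rcases hz with hz | hz
      · exact hreach_to_x z hz
      · rw [Set.mem_singleton_iff] at hz; subst hz; exact reach_refl hxKx
    intro z hz w hw
    exact (hto z hz).trans (hto w hw).symm
  -- a neighbour of x inside K, for the singleton case
  obtain ⟨y₀, hy₀adj, hy₀s, hy₀r⟩ := nbr_class hcac.1 hxs ha
  have hy₀K : y₀ ∈ K := (hKmem y₀).2 ⟨hy₀s, hy₀r⟩
  -- transfer of blocks
  have htrans : ∀ B, Blk H (K ∪ {x}) B → Blk H s B := by
    rintro B ⟨hBsub, hBconn, hBpre, hBmax⟩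
    refine ⟨hBsub.trans hKxs, hBconn, hBpre, ?_⟩
    -- find β ∈ B with β ≠ x
    have hβ : ∃ β ∈ B, β ≠ x := by
      by_contra hcon
      push_neg at hcon
      obtain ⟨b₀, hb₀⟩ := hBconn.1
      have hBx : B = {x} := by
        apply Set.eq_singleton_iff_unique_mem.2
        exact ⟨(hcon b₀ hb₀) ▸ hb₀, fun z hz => hcon z hz⟩
      exact absurd hBx (fun h => blk_not_singleton ⟨hBsub, hBconn, hBpre, hBmax⟩
        hy₀adj (Or.inl hy₀K) h)
    obtain ⟨β, hβB, hβx⟩ := hβ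
    have hβK : β ∈ K := (hBsub hβB).resolve_right hβx
    intro B' hB's hBB' hB'conn hB'pre
    have hB'sub : B' ⊆ K ∪ {x} := by
      intro w hw
      by_contra hnot
      have hwsx : w ∈ s \ {x} := ⟨hB's hw, fun hwx => hnot (Or.inr hwx)⟩
      have hwK : w ∉ K := fun h => hnot (Or.inl h)
      have hreach : Reach H (s \ {x}) β w := by
        by_cases hxB' : x ∈ B'
        · have := hB'pre x hxB' β ⟨hBB' hβB, by simpa using hβx⟩ w ⟨hw, hwsx.2⟩
          exact this.mono (by
            intro z hz
            exact ⟨hB's hz.1, hz.2⟩)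
        · have := hB'conn.2 β (hBB' hβB) w hw
          exact this.mono (by
            intro z hz
            exact ⟨hB's hz, fun hzx => hxB' (by rw [Set.mem_singleton_iff] at hzx; exact hzx ▸ hz)⟩)
      exact hwK (hKreach hβK hreach)
    exact hBmax B' hB'sub hBB' hB'conn hB'pre
  refine ⟨haK, hKsub, hPreK, hConnKx, htrans, hConnKx, ?_, ?_⟩
  · intro B hB
    exact hcac.2.1 B (htrans B hB)
  · intro v B₁ B₂ B₃ h₁ hv₁ h₂ hv₂ h₃ hv₃
    exact hcac.2.2 v B₁ B₂ B₃ (htrans _ h₁) hv₁ (htrans _ h₂) hv₂ (htrans _ h₃) hv₃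
  
lemma pre_restrict {s₁ s₂ : Set V} {x y : V} (hx₁ : x ∈ s₁) (hyx : y ≠ x)
    (hint : ∀ z, z ∈ s₁ → z ∈ s₂ → z = x)
    (hnoedge : ∀ a' b', a' ∈ s₁ → b' ∈ s₂ → H.Adj a' b' → a' = x ∨ b' = x)
    (hpre : Pre H ((s₁ ∪ s₂) \ {y})) : Pre H (s₁ \ {y}) := by
  intro w hw w' hw'
  obtain ⟨p, hp⟩ := hpre w ⟨Or.inl hw.1, hw.2⟩ w' ⟨Or.inl hw'.1, hw'.2⟩
  obtain ⟨q, hq⟩ := walk_confine (A := s₁ \ {y}) (B := s₂ \ {y}) (x := x)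
    ⟨hx₁, by simpa using hyx.symm⟩
    (by
      rintro a' b' ⟨ha1, -⟩ ⟨hb1, -⟩ hadj
      exact hnoedge a' b' ha1 hb1 hadj)
    (by
      rintro z ⟨hz1, -⟩ ⟨hz2, -⟩
      exact hint z hz1 hz2)
    p
    (by
      intro z hz
      rcases (hp z hz).1 with h | h
      · exact Or.inl ⟨h, (hp z hz).2⟩
      · exact Or.inr ⟨h, (hp z hz).2⟩)
    hw hw'
  exact ⟨q, hq⟩

lemma ve_ne {x y : V} (h : y ≠ x) :
    s(((y, 0) : V × Fin 2), (y, 1)) ≠ s(((x, 0) : V × Fin 2), (x, 1)) := by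
  intro hc
  rcases Sym2.eq_iff.1 hc with ⟨h1, -⟩ | ⟨h1, -⟩ <;> exact h (congrArg Prod.fst h1)

/-- Main induction: the prism over a cactus with even cycles has a hamiltonian
cycle through the vertical edges at all non-cut vertices. -/
theorem main (C : H.Coloring (Fin 2)) :
    ∀ (n : ℕ) (s : Set V), s.ncard ≤ n → Cac H s →
    ∃ (a : V × Fin 2) (p : (Pr H).Walk a a), p.IsCycle ∧
      (∀ y : V × Fin 2, y ∈ p.support ↔ y.1 ∈ s) ∧
      ∀ x ∈ s, Pre H (s \ {x}) → s((x, (0 : Fin 2)), (x, 1)) ∈ p.edges := by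
  intro n
  induction n with
  | zero =>
    intro s hcard hcac
    exfalso
    have hpos := (Set.ncard_pos (Set.toFinite s)).2 hcac.1.1
    omega
  | succ n ih =>
    intro s hcard hcac
    by_cases hcut : ∀ x ∈ s, Pre H (s \ {x})
    · -- no cut vertex: s itself is a block
      have hblk : Blk H s s :=
        ⟨subset_rfl, hcac.1, hcut, fun B' h1 h2 _ _ => subset_antisymm h1 h2⟩
      rcases hcac.2.1 s hblk with ⟨u, w, huw, hs⟩ | ⟨v, c, hcyc, hsupp, -⟩
      · obtain ⟨p, hp, hpsupp, hu, hw⟩ := square_cycle huw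
        refine ⟨_, p, hp, ?_, ?_⟩
        · intro y
          rw [hpsupp y, hs]
          simp
        · intro z hz _
          rw [hs] at hz
          rcases hz with rfl | hz
          · exact hu
          · rw [Set.mem_singleton_iff] at hz
            subst hz
            exact hw
      · have hmemc : ∀ z, z ∈ c.support ↔ z ∈ s := by
          intro z
          rw [← hsupp]
          rfl
        have heven : Even c.length := (coloring_walk_parity C c).1 rfl
        obtain ⟨p, hp, hpsupp, hv⟩ := lift_cycle c hcyc heven
        refine ⟨_, p, hp, ?_, ?_⟩
        · intro y
          rw [hpsupp y, hmemc]
        · intro z hz _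
          exact hv z ((hmemc z).2 hz)
    · -- there is a cut vertex x
      push_neg at hcut
      obtain ⟨x, hxs, hxcut⟩ := hcut
      have hxcut' : ∃ a ∈ s \ {x}, ∃ b ∈ s \ {x}, ¬ Reach H (s \ {x}) a b := by
        unfold Pre at hxcut
        push_neg at hxcut
        exact hxcut
      obtain ⟨a, ha, b, hb, hnr⟩ := hxcut'
      set K₁ : Set V := {z | z ∈ s \ {x} ∧ Reach H (s \ {x}) a z} with hK₁
      set K₂ : Set V := {z | z ∈ s \ {x} ∧ Reach H (s \ {x}) b z} with hK₂
      have hmem₁ : ∀ z, z ∈ K₁ ↔ (z ∈ s \ {x} ∧ Reach H (s \ {x}) a z) := fun z => by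
        rw [hK₁]; rfl
      have hmem₂ : ∀ z, z ∈ K₂ ↔ (z ∈ s \ {x} ∧ Reach H (s \ {x}) b z) := fun z => by
        rw [hK₂]; rfl
      obtain ⟨haK₁, hK₁sub, hPreK₁, hConn₁, htrans₁, hcac₁⟩ := side_props hcac hxs ha K₁ hK₁
      obtain ⟨hbK₂, hK₂sub, hPreK₂, hConn₂, htrans₂, hcac₂⟩ := side_props hcac hxs hb K₂ hK₂
      have hxK₁ : x ∉ K₁ := fun h => ((hmem₁ x).1 h).1.2 rfl
      have hxK₂ : x ∉ K₂ := fun h => ((hmem₂ x).1 h).1.2 rfl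
      have hdisj : ∀ z, z ∈ K₁ → z ∈ K₂ → False := by
        intro z h1 h2
        exact hnr ((((hmem₁ z).1 h1).2).trans (((hmem₂ z).1 h2).2).symm)
      have hdich : ∀ z ∈ s \ {x}, z ∈ K₁ ∨ z ∈ K₂ := by
        intro z hz
        by_contra hcon
        push_neg at hcon
        obtain ⟨ya, hya_adj, hya_s, hya_r⟩ := nbr_class hcac.1 hxs ha
        obtain ⟨yb, hyb_adj, hyb_s, hyb_r⟩ := nbr_class hcac.1 hxs hb
        obtain ⟨yz, hyz_adj, hyz_s, hyz_r⟩ := nbr_class hcac.1 hxs hz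
        obtain ⟨Ba, hBa, hxBa, hyaBa⟩ := exists_blk hxs hya_s.1 hya_adj
        obtain ⟨Bb, hBb, hxBb, hybBb⟩ := exists_blk hxs hyb_s.1 hyb_adj
        obtain ⟨Bz, hBz, hxBz, hyzBz⟩ := exists_blk hxs hyz_s.1 hyz_adj
        have hside : ∀ (B : Set V), Blk H s B → x ∈ B → ∀ u' ∈ B, u' ≠ x → ∀ v' ∈ B, v' ≠ x →
            Reach H (s \ {x}) u' v' := by
          intro B hB hxB u' hu' hu'x v' hv' hv'x
          have := hB.2.2.1 x hxB u' ⟨hu', by simpa using hu'x⟩ v' ⟨hv', by simpa using hv'x⟩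
          exact this.mono (fun t ht => ⟨hB.1 ht.1, ht.2⟩)
        have hcontr : ∀ (B : Set V), Blk H s B → x ∈ B →
            ∀ u' v' : V, u' ∈ B → v' ∈ B → u' ≠ x → v' ≠ x →
            ∀ u'' v'' : V, Reach H (s \ {x}) u'' u' → Reach H (s \ {x}) v'' v' →
            Reach H (s \ {x}) u'' v'' := by
          intro B hB hxB u' v' hu' hv' hux hvx u'' v'' hru hrv
          exact (hru.trans (hside B hB hxB u' hu' hux v' hv' hvx)).trans hrv.symm
        have hya_ne : ya ≠ x := fun h => hya_s.2 (by simpa using h)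
        have hyb_ne : yb ≠ x := fun h => hyb_s.2 (by simpa using h)
        have hyz_ne : yz ≠ x := fun h => hyz_s.2 (by simpa using h)
        have hne_ab : Ba ≠ Bb := by
          intro hEq
          exact hnr (hcontr Ba hBa hxBa ya yb hyaBa (hEq ▸ hybBb) hya_ne hyb_ne a b hya_r hyb_r)
        have hne_az : Ba ≠ Bz := by
          intro hEq
          exact hcon.1 ((hmem₁ z).2 ⟨hz,
            hcontr Ba hBa hxBa ya yz hyaBa (hEq ▸ hyzBz) hya_ne hyz_ne a z hya_r hyz_r⟩)
        have hne_bz : Bb ≠ Bz := by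
          intro hEq
          exact hcon.2 ((hmem₂ z).2 ⟨hz,
            hcontr Bb hBb hxBb yb yz hybBb (hEq ▸ hyzBz) hyb_ne hyz_ne b z hyb_r hyz_r⟩)
        rcases hcac.2.2 x Ba Bb Bz hBa hxBa hBb hxBb hBz hxBz with h | h | h
        · exact hne_ab h
        · exact hne_az h
        · exact hne_bz h
      set s₁ : Set V := K₁ ∪ {x} with hs₁def
      set s₂ : Set V := K₂ ∪ {x} with hs₂def
      have hx₁ : x ∈ s₁ := Or.inr rfl
      have hx₂ : x ∈ s₂ := Or.inr rfl
      have hs₁s : s₁ ⊆ s := by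
        rintro z (hz | hz)
        · exact (hK₁sub hz).1
        · rw [Set.mem_singleton_iff] at hz; subst hz; exact hxs
      have hs₂s : s₂ ⊆ s := by
        rintro z (hz | hz)
        · exact (hK₂sub hz).1
        · rw [Set.mem_singleton_iff] at hz; subst hz; exact hxs
      have hunion : s₁ ∪ s₂ = s := by
        apply subset_antisymm
        · exact Set.union_subset hs₁s hs₂s
        · intro z hz
          by_cases hzx : z = x
          · exact Or.inl (Or.inr (by simp [hzx]))
          · rcases hdich z ⟨hz, by simpa using hzx⟩ with h | h
            · exact Or.inl (Or.inl h)
            · exact Or.inr (Or.inl h)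
      have hint : ∀ z, z ∈ s₁ → z ∈ s₂ → z = x := by
        rintro z (h1 | h1) h2
        · rcases h2 with h2 | h2
          · exact absurd h2 (fun h => hdisj z h1 h)
          · rwa [Set.mem_singleton_iff] at h2
        · rwa [Set.mem_singleton_iff] at h1
      have hnoedge : ∀ a' b', a' ∈ s₁ → b' ∈ s₂ → H.Adj a' b' → a' = x ∨ b' = x := by
        rintro a' b' (h1 | h1) (h2 | h2) hadj
        · exfalso
          have hb's : b' ∈ s \ {x} := hK₂sub h2
          have hb'K₁ : b' ∈ K₁ := (hmem₁ b').2
            ⟨hb's, (((hmem₁ a').1 h1).2).trans (reach_of_adj hadj (hK₁sub h1) hb's)⟩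
          exact hdisj b' hb'K₁ h2
        · right; rwa [Set.mem_singleton_iff] at h2
        · left; rwa [Set.mem_singleton_iff] at h1
        · left; rwa [Set.mem_singleton_iff] at h1
      have hs₁x : s₁ \ {x} = K₁ := by
        apply subset_antisymm
        · rintro z ⟨hz1 | hz1, hz2⟩
          · exact hz1
          · exact absurd hz1 (by simpa using hz2)
        · intro z hz
          exact ⟨Or.inl hz, fun hc => hxK₁ ((Set.mem_singleton_iff.1 hc) ▸ hz)⟩
      have hs₂x : s₂ \ {x} = K₂ := by
        apply subset_antisymm
        · rintro z ⟨hz1 | hz1, hz2⟩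
          · exact hz1
          · exact absurd hz1 (by simpa using hz2)
        · intro z hz
          exact ⟨Or.inl hz, fun hc => hxK₂ ((Set.mem_singleton_iff.1 hc) ▸ hz)⟩
      have hbns₁ : b ∉ s₁ := by
        rintro (h | h)
        · exact hnr ((hmem₁ b).1 h).2
        · exact hb.2 h
      have hans₂ : a ∉ s₂ := by
        rintro (h | h)
        · exact hnr (((hmem₂ a).1 h).2).symm
        · exact ha.2 h
      have hcard₁ : s₁.ncard ≤ n := by
        have hss : s₁ ⊂ s := ⟨hs₁s, fun hcon => hbns₁ (hcon hb.1)⟩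
        have := Set.ncard_lt_ncard hss (Set.toFinite s)
        omega
      have hcard₂ : s₂.ncard ≤ n := by
        have hss : s₂ ⊂ s := ⟨hs₂s, fun hcon => hans₂ (hcon ha.1)⟩
        have := Set.ncard_lt_ncard hss (Set.toFinite s)
        omega
      obtain ⟨a₁, p₁, hp₁cyc, hp₁supp, hp₁vert⟩ := ih s₁ hcard₁ hcac₁
      obtain ⟨a₂, p₂, hp₂cyc, hp₂supp, hp₂vert⟩ := ih s₂ hcard₂ hcac₂
      have hvert₁ : s((x, (0 : Fin 2)), (x, 1)) ∈ p₁.edges := by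
        apply hp₁vert x hx₁
        rw [hs₁x]
        exact hPreK₁
      have hvert₂ : s((x, (0 : Fin 2)), (x, 1)) ∈ p₂.edges := by
        apply hp₂vert x hx₂
        rw [hs₂x]
        exact hPreK₂
      obtain ⟨p, hpcyc, hpsupp, hpres₁, hpres₂⟩ :=
        splice hp₁cyc hp₂cyc hp₁supp hp₂supp hint hvert₁ hvert₂
      refine ⟨_, p, hpcyc, ?_, ?_⟩
      · intro y
        rw [hpsupp y]
        rw [← hunion]
        simp [Set.mem_union]
      · intro y hy hyPre
        have hyx : y ≠ x := by
          rintro rfl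
          exact hxcut hyPre
        have hy2 : y ∈ s₁ ∪ s₂ := by rw [hunion]; exact hy
        rcases hy2 with hy1 | hy1
        · have hyPre₁ : Pre H (s₁ \ {y}) :=
            pre_restrict hx₁ hyx hint hnoedge (by rw [hunion]; exact hyPre)
          exact hpres₁ _ (hp₁vert y hy1 hyPre₁) (ve_ne hyx)
        · have hnoedge' : ∀ a' b', a' ∈ s₂ → b' ∈ s₁ → H.Adj a' b' → a' = x ∨ b' = x := by
            intro a' b' h1 h2 hadj
            rcases hnoedge b' a' h2 h1 hadj.symm with h | h
            · exact Or.inr h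
            · exact Or.inl h
          have hyPre₂ : Pre H (s₂ \ {y}) :=
            pre_restrict hx₂ hyx (fun z h1 h2 => hint z h2 h1) hnoedge'
              (by rw [Set.union_comm, hunion]; exact hyPre)
          exact hpres₂ _ (hp₂vert y hy1 hyPre₂) (ve_ne hyx)

end PrismCactus


/-- If `G` has a spanning subgraph that is a bipartite cactus, then `G` is prism-hamiltonian. -/
theorem prism_hamiltonian_of_spanning_bipartite_cactus {V : Type*} [Fintype V] [DecidableEq V]
    (G H : SimpleGraph V) (hle : H ≤ G) (hH : H.IsCactus) (hbip : H.Colorable 2) :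
    (G □ (⊤ : SimpleGraph (Fin 2))).IsHamiltonian := by
  classical
  obtain ⟨C⟩ := hbip
  have hcac : PrismCactus.Cac H Set.univ := PrismCactus.IsCactus.cac_univ hH
  obtain ⟨a, p, hcyc, hsupp, -⟩ :=
    PrismCactus.main C (Set.univ : Set V).ncard Set.univ le_rfl hcac
  intro _
  have hle2 : PrismCactus.Pr H ≤ G □ (⊤ : SimpleGraph (Fin 2)) := by
    intro y z hyz
    rw [SimpleGraph.boxProd_adj] at hyz ⊢
    rcases hyz with ⟨h, h2⟩ | ⟨h, h2⟩
    · exact Or.inl ⟨hle h, h2⟩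
    · exact Or.inr ⟨h, h2⟩
  have hinj : Function.Injective ⇑(SimpleGraph.Hom.ofLE hle2) := fun _ _ h => h
  refine ⟨a, p.map (SimpleGraph.Hom.ofLE hle2), ?_⟩
  rw [SimpleGraph.Walk.isHamiltonianCycle_iff_isCycle_and_support_count_tail_eq_one]
  constructor
  · exact hcyc.map hinj
  · intro y
    have hsup : (p.map (SimpleGraph.Hom.ofLE hle2)).support = p.support := by
      rw [SimpleGraph.Walk.support_map]
      exact List.map_id _
  
    rw [hsup]
    have hmem : y ∈ p.support := (hsupp y).2 trivial
    have hmemtail : y ∈ p.support.tail :=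
      (PrismCactus.end_mem_support_tail_of_closed hcyc.ne_nil).1 hmem
    convert List.count_eq_one_of_mem hcyc.support_nodup hmemtail
end

section
/- The prism over an odd cycle C_n (n odd, n ≥ 3) has no Hamiltonian cycle that uses the vertical edges at two non-adjacent vertices of C_n. -/
open SimpleGraph
open Fin.CommRing


private lemma getVert_injOn_of_support_nodup {V : Type*} {G : SimpleGraph V} {u v : V}
    (p : G.Walk u v) (hnd : p.support.Nodup) :
    ∀ i j : ℕ, i ≤ p.length → j ≤ p.length → p.getVert i = p.getVert j → i = j := by
  induction p with
  | nil => intro i j hi hj _; simp at hi hj; omega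
  | @cons a b c h q ih =>
    intro i j hi hj hij
    rw [Walk.support_cons, List.nodup_cons] at hnd
    obtain ⟨ha, hq⟩ := hnd
    match i, j with
    | 0, 0 => rfl
    | 0, j+1 =>
      exfalso
      apply ha
      rw [Walk.mem_support_iff_exists_getVert]
      refine ⟨j, ?_, ?_⟩
      · rw [← Walk.getVert_cons_succ q h, ← hij, Walk.getVert_zero]
      · simp only [Walk.length_cons] at hj; omega
    | i+1, 0 =>
      exfalso
      apply ha
      rw [Walk.mem_support_iff_exists_getVert]
      refine ⟨i, ?_, ?_⟩
      · rw [← Walk.getVert_cons_succ q h, hij, Walk.getVert_zero]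
      · simp only [Walk.length_cons] at hi; omega
    | i+1, j+1 =>
      simp only [Walk.getVert_cons_succ] at hij
      simp only [Walk.length_cons] at hi hj
      have := ih hq i j (by omega) (by omega) hij
      omega

private lemma cycle_getVert_injOn {V : Type*} {G : SimpleGraph V} {x : V} (c : G.Walk x x)
    (hc : c.support.tail.Nodup) :
    ∀ i j : ℕ, 1 ≤ i → i ≤ c.length → 1 ≤ j → j ≤ c.length → c.getVert i = c.getVert j → i = j := by
  cases c with
  | nil => intro i j h1 h2 h3 h4 _; simp at h2 h4; omega
  | cons h q =>
    intro i j h1 h2 h3 h4 hij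
    rw [Walk.support_cons, List.tail_cons] at hc
    match i, j with
    | i+1, j+1 =>
      simp only [Walk.getVert_cons_succ] at hij
      simp only [Walk.length_cons] at h2 h4
      have hnd : q.support.Nodup := hc
      have := getVert_injOn_of_support_nodup q hnd i j (by omega) (by omega) hij
      omega

private lemma cycle_adj_start {V : Type*} {G : SimpleGraph V} {x : V} {c : G.Walk x x}
    (hc : c.IsCycle) (t : V) :
    c.toSubgraph.Adj x t ↔ t = c.getVert 1 ∨ t = c.getVert (c.length - 1) := by
  have hlen : 3 ≤ c.length := hc.three_le_length
  have hinj := cycle_getVert_injOn c hc.support_nodup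
  constructor
  · intro hadj
    have hne : x ≠ t := hadj.ne
    obtain ⟨i, heq, hlt⟩ := (Walk.toSubgraph_adj_iff _).mp hadj
    rw [Sym2.eq_iff] at heq
    rcases heq with ⟨h1, h2⟩ | ⟨h1, h2⟩
    · match i with
      | 0 => left; rw [← h2]
      | i+1 =>
        exfalso
        have : c.getVert (i+1) = c.getVert c.length := by
          rw [h1, Walk.getVert_length]
        have := hinj (i+1) c.length (by omega) (by omega) (by omega) (by omega) this
        omega
    · have : c.getVert (i+1) = c.getVert c.length := by rw [h2, Walk.getVert_length]
      have := hinj (i+1) c.length (by omega) (by omega) (by omega) (by omega) this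
      right
      rw [← h1]
      congr 1
      omega
  · have hadj1 : c.toSubgraph.Adj x (c.getVert 1) := by
      have := c.toSubgraph_adj_getVert (i := 0) (by omega)
      rwa [Walk.getVert_zero] at this
    have hadj2 : c.toSubgraph.Adj (c.getVert (c.length - 1)) x := by
      have := c.toSubgraph_adj_getVert (i := c.length - 1) (by omega)
      have h2 : c.length - 1 + 1 = c.length := by omega
      rwa [h2, Walk.getVert_length] at this
    rintro (rfl | rfl)
    · exact hadj1
    · exact hadj2.symm

private lemma cycle_two_neighbors' {V : Type*} [DecidableEq V] {G : SimpleGraph V} {w : V}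
    {p : G.Walk w w} (hp : p.IsHamiltonianCycle) (x : V) :
    ∃ y z : V, y ≠ z ∧ ∀ t, (p.toSubgraph.Adj x t ↔ t = y ∨ t = z) := by
  have hx : x ∈ p.support := hp.mem_support x
  have hc : (p.rotate x hx).IsCycle := hp.isCycle.rotate hx
  have hts : (p.rotate x hx).toSubgraph = p.toSubgraph := p.toSubgraph_rotate hx
  have hlen : 3 ≤ (p.rotate x hx).length := hc.three_le_length
  refine ⟨(p.rotate x hx).getVert 1, (p.rotate x hx).getVert ((p.rotate x hx).length - 1), ?_, ?_⟩
  · intro h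
    have := cycle_getVert_injOn _ hc.support_nodup 1 ((p.rotate x hx).length - 1)
      (by omega) (by omega) (by omega) (by omega) h
    omega
  · intro t
    rw [← hts]
    exact cycle_adj_start hc t

private lemma walk_S {V : Type*} {G : SimpleGraph V} {H : G.Subgraph} (S : V → Prop)
    (hpres : ∀ x y, H.Adj x y → (S x ↔ S y)) :
    ∀ {A B : H.verts} (W : H.coe.Walk A B), S A.val → S B.val := by
  intro A B W
  induction W with
  | nil => exact id
  | cons h q ih => exact fun hs => ih ((hpres _ _ ((Subgraph.coe_adj _ _ _).mp h)).mp hs)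

set_option maxHeartbeats 1000000 in

private lemma core_combinatorial (m : ℕ) (hodd : Odd (m+3))
    (a : Fin (m+3) → Fin 2 → Prop) (r : Fin (m+3) → Prop)
    (key : ∀ i ℓ, (¬ a (i-1) ℓ ∧ a i ℓ ∧ r i) ∨ (a (i-1) ℓ ∧ ¬ a i ℓ ∧ r i) ∨
      (a (i-1) ℓ ∧ a i ℓ ∧ ¬ r i))
    (u v : Fin (m+3)) (huv : u ≠ v) (hnadj : ¬(u - v = 1 ∨ v - u = 1))
    (hru : r u) (hrv : r v) :
    ∃ p q : Fin (m+3), p ≠ q ∧ (∀ ℓ, ¬ a p ℓ) ∧ (∀ ℓ, ¬ a q ℓ) := by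
  have hpar : ∀ i : Fin (m+3), ((a i 0 ↔ a i 1) ↔ (a (i+1) 0 ↔ a (i+1) 1)) := by
    intro i
    have h0 := key (i+1) 0
    have h1 := key (i+1) 1
    rw [add_sub_cancel_right] at h0 h1
    tauto
  have hconst : ∀ i j : Fin (m+3), ((a i 0 ↔ a i 1) ↔ (a j 0 ↔ a j 1)) := by
    have hk : ∀ (k : ℕ) (i : Fin (m+3)), ((a i 0 ↔ a i 1) ↔ (a (i + (k:Fin (m+3))) 0 ↔ a (i + (k:Fin (m+3))) 1)) := by
      intro k
      induction k with
      | zero => intro i; simp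
      | succ k ih =>
        intro i
        have h1 := ih i
        have h2 := hpar (i + (k : Fin (m+3)))
        have h3 : ((k+1 : ℕ) : Fin (m+3)) = (k : Fin (m+3)) + 1 := by push_cast; ring
        rw [h3, ← add_assoc]
        tauto
    intro i j
    have := hk (j - i).val i
    rwa [Fin.cast_val_eq_self, add_sub_cancel] at this
  by_cases hc : (a 0 0 ↔ a 0 1)
  · -- even case: every column has both levels equal
    have hall : ∀ i : Fin (m+3), (a i 0 ↔ a i 1) := fun i => (hconst 0 i).mp hc
    have hu := key u 0
    have hv := key v 0
    have hpu : ∃ p, (p = u - 1 ∨ p = u) ∧ ¬ a p 0 := by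
      rcases hu with ⟨h, _, _⟩ | ⟨_, h, _⟩ | ⟨_, _, h⟩
      · exact ⟨u - 1, Or.inl rfl, h⟩
      · exact ⟨u, Or.inr rfl, h⟩
      · exact absurd hru h
    have hpv : ∃ q, (q = v - 1 ∨ q = v) ∧ ¬ a q 0 := by
      rcases hv with ⟨h, _, _⟩ | ⟨_, h, _⟩ | ⟨_, _, h⟩
      · exact ⟨v - 1, Or.inl rfl, h⟩
      · exact ⟨v, Or.inr rfl, h⟩
      · exact absurd hrv h
    obtain ⟨p, hp1, hp0⟩ := hpu
    obtain ⟨q, hq1, hq0⟩ := hpv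
    refine ⟨p, q, ?_, ?_, ?_⟩
    · rintro rfl
      rcases hp1 with rfl | rfl <;> rcases hq1 with h | h
      · exact huv (by linear_combination h)
      · exact hnadj (Or.inl (by linear_combination h))
      · exact hnadj (Or.inr (by linear_combination -h))
      · exact huv h
    · intro ℓ
      fin_cases ℓ
      · exact hp0
      · exact fun h => hp0 ((hall p).mpr h)
    · intro ℓ
      fin_cases ℓ
      · exact hq0
      · exact fun h => hq0 ((hall q).mpr h)
  · -- odd case: impossible
    exfalso
    have hall : ∀ i : Fin (m+3), ¬(a i 0 ↔ a i 1) := fun i h => hc ((hconst i 0).mp h)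
    have hstep : ∀ i : Fin (m+3), ¬(a (i-1) 0 ↔ a i 0) := by
      intro i
      have k0 := key i 0
      have k1 := key i 1
      have h1 := hall i
      have h2 := hall (i-1)
      tauto
    have hg : ∀ k : ℕ, ¬(a (k : Fin (m+3)) 0 ↔ a ((k+1 : ℕ) : Fin (m+3)) 0) := by
      intro k
      have := hstep ((k : Fin (m+3)) + 1)
      rw [add_sub_cancel_right] at this
      have h3 : ((k+1 : ℕ) : Fin (m+3)) = (k : Fin (m+3)) + 1 := by push_cast; ring
      rw [h3]
      exact this
    have heven : ∀ k : ℕ, ((a (0 : Fin (m+3)) 0 ↔ a (k : Fin (m+3)) 0) ↔ Even k) := by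
      intro k
      induction k with
      | zero => simp
      | succ k ih =>
        have := hg k
        rw [Nat.even_add_one]
        tauto
    have h1 : Even (m+3) := by
      rw [← heven (m+3), Fin.natCast_self]
    obtain ⟨t, ht⟩ := hodd
    obtain ⟨s, hs⟩ := h1
    omega

set_option maxHeartbeats 1600000 in
/-- The prism over an odd cycle `Cₙ` (`n` odd, `n ≥ 3`) has no Hamiltonian cycle using the
vertical edges at two non-adjacent vertices of the cycle. -/
theorem prism_odd_cycle_no_hamiltonian_cycle_through_two_nonadjacent_vertical_edges
    (n : ℕ) (hn : 3 ≤ n) (hodd : Odd n) (u v : Fin n) (huv : u ≠ v)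
    (hnadj : ¬ (SimpleGraph.cycleGraph n).Adj u v) :
    ¬ ∃ (w : Fin n × Fin 2)
        (p : (SimpleGraph.cycleGraph n □ (⊤ : SimpleGraph (Fin 2))).Walk w w),
      p.IsHamiltonianCycle ∧
      s((u, (0 : Fin 2)), (u, (1 : Fin 2))) ∈ p.edges ∧
      s((v, (0 : Fin 2)), (v, (1 : Fin 2))) ∈ p.edges := by
  rintro ⟨w, p, hp, heu, hev⟩
  obtain ⟨m, rfl⟩ : ∃ m, n = m + 3 := ⟨n - 3, by omega⟩
  set T := p.toSubgraph with hTdef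
  have hru : T.Adj (u, 0) (u, 1) := Subgraph.mem_edgeSet.mp ((Walk.mem_edges_toSubgraph p).mpr heu)
  have hrv : T.Adj (v, 0) (v, 1) := Subgraph.mem_edgeSet.mp ((Walk.mem_edges_toSubgraph p).mpr hev)
  have hnadj' : ¬(u - v = 1 ∨ v - u = 1) := fun h => hnadj (cycleGraph_adj.mpr h)
  -- candidate neighbors
  have hG' : ∀ (x t : Fin (m+3) × Fin 2), T.Adj x t →
      t = (x.1 - 1, x.2) ∨ t = (x.1 + 1, x.2) ∨ t = (x.1, x.2 + 1) := by
    intro x t h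
    have hG := h.adj_sub
    rw [boxProd_adj] at hG
    rcases hG with ⟨hc, he⟩ | ⟨ht, he⟩
    · rcases cycleGraph_adj.mp hc with h1 | h1
      · left
        have : t.1 = x.1 - 1 := by linear_combination -h1
        exact Prod.ext this he.symm
      · right; left
        have : t.1 = x.1 + 1 := by linear_combination h1
        exact Prod.ext this he.symm
    · right; right
      have h2 : t.2 = x.2 + 1 := by
        have : ∀ a b : Fin 2, a ≠ b → b = a + 1 := by decide
        exact this _ _ ((top_adj _ _).mp ht)
      exact Prod.ext he.symm h2
  -- exactly two of three edges at each vertex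
  have key : ∀ (i : Fin (m+3)) (ℓ : Fin 2),
      (¬ T.Adj (i-1, ℓ) (i-1+1, ℓ) ∧ T.Adj (i, ℓ) (i+1, ℓ) ∧ T.Adj (i, 0) (i, 1)) ∨
      (T.Adj (i-1, ℓ) (i-1+1, ℓ) ∧ ¬ T.Adj (i, ℓ) (i+1, ℓ) ∧ T.Adj (i, 0) (i, 1)) ∨
      (T.Adj (i-1, ℓ) (i-1+1, ℓ) ∧ T.Adj (i, ℓ) (i+1, ℓ) ∧ ¬ T.Adj (i, 0) (i, 1)) := by
    intro i ℓ
    have hsub : i - 1 + 1 = i := by ring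
    rw [hsub]
    obtain ⟨y, z, hyz, hiff⟩ := cycle_two_neighbors' hp (i, ℓ)
    have hy := hG' (i, ℓ) y ((hiff y).mpr (Or.inl rfl))
    have hz := hG' (i, ℓ) z ((hiff z).mpr (Or.inr rfl))
    simp only [] at hy hz
    have hA : T.Adj (i-1, ℓ) (i, ℓ) ↔ ((i - 1, ℓ) = y ∨ (i - 1, ℓ) = z) := by
      rw [← hiff]
      exact ⟨Subgraph.Adj.symm, Subgraph.Adj.symm⟩
    have hB : T.Adj (i, ℓ) (i+1, ℓ) ↔ ((i + 1, ℓ) = y ∨ (i + 1, ℓ) = z) := hiff _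
    have hR : T.Adj (i, 0) (i, 1) ↔ ((i, ℓ + 1) = y ∨ (i, ℓ + 1) = z) := by
      rw [← hiff]
      fin_cases ℓ
      · exact Iff.rfl
      · show T.Adj (i, 0) (i, 1) ↔ T.Adj (i, 1) (i, 0)
        exact ⟨Subgraph.Adj.symm, Subgraph.Adj.symm⟩
    have hne12 : i - 1 ≠ i + 1 := by
      intro h
      have h2 : (2 : Fin (m+3)) = 0 := by linear_combination -h
      have h3 := congrArg Fin.val h2
      simp at h3
      rw [Nat.mod_eq_of_lt (by omega)] at h3
      omega
    have d12 : ((i - 1 : Fin (m+3)), ℓ) ≠ (i + 1, ℓ) := fun h => hne12 (congrArg Prod.fst h)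
    have d21 : ((i + 1 : Fin (m+3)), ℓ) ≠ (i - 1, ℓ) := fun h => d12 h.symm
    have hneℓ : ℓ ≠ ℓ + 1 := by fin_cases ℓ <;> decide
    have d13 : ((i - 1 : Fin (m+3)), ℓ) ≠ (i, ℓ + 1) := fun h => hneℓ (congrArg Prod.snd h)
    have d31 : ((i : Fin (m+3)), ℓ + 1) ≠ (i - 1, ℓ) := fun h => d13 h.symm
    have d23 : ((i + 1 : Fin (m+3)), ℓ) ≠ (i, ℓ + 1) := fun h => hneℓ (congrArg Prod.snd h)
    have d32 : ((i : Fin (m+3)), ℓ + 1) ≠ (i + 1, ℓ) := fun h => d23 h.symm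
    rcases hy with rfl | rfl | rfl <;> rcases hz with rfl | rfl | rfl <;>
      first
        | exact absurd rfl hyz
        | (have e1 : ((i - 1 : Fin (m+3)), ℓ) = (i - 1, ℓ) := rfl
           have e2 : ((i + 1 : Fin (m+3)), ℓ) = (i + 1, ℓ) := rfl
           have e3 : ((i : Fin (m+3)), ℓ + 1) = (i, ℓ + 1) := rfl
           tauto)
  obtain ⟨pp, qq, hppqq, hpa, hqa⟩ :=
    core_combinatorial m hodd (fun i ℓ => T.Adj (i, ℓ) (i+1, ℓ)) (fun i => T.Adj (i, 0) (i, 1))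
      key u v huv hnadj' hru hrv
  -- disconnection argument
  set d : Fin (m+3) → ℕ := fun i => (i - (pp+1)).val with hd
  have hdpp : d pp = m + 2 := by
    show (pp - (pp+1)).val = m + 2
    have h1 : pp - (pp + 1) = -1 := by ring
    rw [h1]
    exact Fin.coe_neg_one
  have hdinj : ∀ i j : Fin (m+3), d i = d j → i = j := by
    intro i j h
    have h1 : i - (pp+1) = j - (pp+1) := Fin.ext h
    linear_combination h1
  have hdqq : d qq ≤ m + 1 := by
    have h1 : d qq ≤ m + 2 := Fin.is_le _
    have h2 : d qq ≠ m + 2 := fun h => hppqq (hdinj pp qq (by omega))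
    omega
  have hstep : ∀ i : Fin (m+3), i ≠ pp → d (i+1) = d i + 1 := by
    intro i hi
    show ((i+1) - (pp+1)).val = (i - (pp+1)).val + 1
    have h1 : (i+1) - (pp+1) = (i - (pp+1)) + 1 := by ring
    rw [h1]
    apply Fin.val_add_one_of_lt
    have h2 : (i - (pp+1)).val ≠ m + 2 := by
      intro h
      exact hi (hdinj i pp (by rw [hdpp]; exact h))
    have h3 := Fin.is_le (i - (pp+1))
    rw [Fin.lt_def, Fin.val_last]
    omega
  have harith : ∀ i : Fin (m+3), i ≠ pp → i ≠ qq → ((d i ≤ d qq) ↔ (d (i+1) ≤ d qq)) := by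
    intro i h1 h2
    rw [hstep i h1]
    have h3 : d i ≠ d qq := fun h => h2 (hdinj _ _ h)
    omega
  have hpres : ∀ x y : Fin (m+3) × Fin 2, T.Adj x y → ((d x.1 ≤ d qq) ↔ (d y.1 ≤ d qq)) := by
    rintro ⟨x1, x2⟩ ⟨y1, y2⟩ h
    have hG := h.adj_sub
    rw [boxProd_adj] at hG
    rcases hG with ⟨hcadj, he⟩ | ⟨_, he⟩
    · simp only [] at hcadj he
      subst he
      rcases cycleGraph_adj.mp hcadj with h1 | h1
      · have hx1 : x1 = y1 + 1 := by linear_combination h1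
        subst hx1
        have hy1p : y1 ≠ pp := fun hh => hpa x2 (by subst hh; exact h.symm)
        have hy1q : y1 ≠ qq := fun hh => hqa x2 (by subst hh; exact h.symm)
        exact (harith y1 hy1p hy1q).symm
      · have hy1 : y1 = x1 + 1 := by linear_combination h1
        subst hy1
        have hx1p : x1 ≠ pp := fun hh => hpa x2 (by subst hh; exact h)
        have hx1q : x1 ≠ qq := fun hh => hqa x2 (by subst hh; exact h)
        exact harith x1 hx1p hx1q
    · simp only [] at he
      rw [he]
  have hver : ∀ x : Fin (m+3) × Fin 2, x ∈ T.verts := by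
    intro x
    rw [hTdef, Walk.verts_toSubgraph]
    exact hp.mem_support x
  have hconn := p.toSubgraph_connected
  obtain ⟨W⟩ := hconn.preconnected ⟨(qq, 0), hver _⟩ ⟨(pp, 0), hver _⟩
  have hfin := walk_S (fun x => d x.1 ≤ d qq) hpres W (le_refl _)
  simp only [] at hfin
  rw [hdpp] at hfin
  omega
end

section
/- Let G be a circuit graph with outer cycle C and let S be a separating set of G with |S| = 2. Then every connected component of G − S contains a vertex of C. -/
open SimpleGraph

/-- Reversal of darts, as a permutation. -/
def dartSymmPerm {V : Type*} (G : SimpleGraph V) : Equiv.Perm G.Dart :=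
  ⟨SimpleGraph.Dart.symm, SimpleGraph.Dart.symm,
    fun d => SimpleGraph.Dart.symm_symm d, fun d => SimpleGraph.Dart.symm_symm d⟩

/-- The face permutation of a rotation system: `φ = rot ∘ symm`. -/
def facePerm {V : Type*} (G : SimpleGraph V) (rot : Equiv.Perm G.Dart) : Equiv.Perm G.Dart :=
  (dartSymmPerm G).trans rot

/-- Two darts lie on the same face iff they are in the same cycle of the face permutation. -/
def faceSetoid {V : Type*} (G : SimpleGraph V) (rot : Equiv.Perm G.Dart) : Setoid G.Dart :=
  ⟨(facePerm G rot).SameCycle,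
    ⟨fun _ => Equiv.Perm.SameCycle.refl _ _, Equiv.Perm.SameCycle.symm,
      Equiv.Perm.SameCycle.trans⟩⟩

/-- The faces of a graph equipped with a rotation system. -/
def Faces {V : Type*} (G : SimpleGraph V) (rot : Equiv.Perm G.Dart) : Type _ :=
  Quotient (faceSetoid G rot)

/-- A plane graph: a connected graph together with a rotation system (a permutation of the
darts preserving tails) satisfying Euler's formula (i.e. a genus-zero embedding), with a
distinguished (unbounded) outer face. -/
structure PlaneGraph (V : Type*) [Fintype V] where
  G : SimpleGraph V
  conn : G.Connected
  rot : Equiv.Perm G.Dart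
  rot_fst : ∀ d : G.Dart, (rot d).toProd.1 = d.toProd.1
  euler : (Fintype.card V : ℤ) + Nat.card (Faces G rot) = Nat.card G.edgeSet + 2
  outer : Faces G rot

namespace PlaneGraph

variable {V : Type*} [Fintype V] (P : PlaneGraph V)

/-- The face containing a dart. -/
def face (d : P.G.Dart) : Faces P.G P.rot := Quotient.mk (faceSetoid P.G P.rot) d

/-- The degree of a face: the number of darts on it (so bridges count twice). -/
noncomputable def faceDeg (f : Faces P.G P.rot) : ℕ := Nat.card {d : P.G.Dart // P.face d = f}

/-- A vertex is incident to a face if some dart with this tail lies on the face. -/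
def VertexOnFace (v : V) (f : Faces P.G P.rot) : Prop :=
  ∃ d : P.G.Dart, P.face d = f ∧ d.toProd.1 = v

/-- An edge is incident to a face if one of its darts lies on the face. -/
def EdgeOnFace (x y : V) (f : Faces P.G P.rot) : Prop :=
  ∃ d : P.G.Dart, P.face d = f ∧ (d.toProd = (x, y) ∨ d.toProd = (y, x))

/-- External vertices: those incident to the outer face. -/
def External (v : V) : Prop := P.VertexOnFace v P.outer

/-- Internal vertices: those not incident to the outer face. -/
def Internal (v : V) : Prop := ¬ P.External v

/-- The degree of a vertex. -/
noncomputable def deg (v : V) : ℕ := Nat.card (P.G.neighborSet v)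

end PlaneGraph

/-- `k`-connectivity (here `k = 3`): at least 4 vertices and no separating set of
size less than 3. -/
def ThreeConnected {W : Type*} (G : SimpleGraph W) : Prop :=
  4 ≤ Nat.card W ∧ ∀ S : Set W, S.ncard < 3 → (G.induce (Sᶜ : Set W)).Connected

/-- 2-connectivity: at least 3 vertices and no cutvertex. -/
def TwoConnected {W : Type*} (G : SimpleGraph W) : Prop :=
  3 ≤ Nat.card W ∧ ∀ S : Set W, S.ncard < 2 → (G.induce (Sᶜ : Set W)).Connected

/-- The graph obtained from `G` by adding a new (apex) vertex adjacent to every vertex in `S`. -/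
def addApex {V : Type*} (G : SimpleGraph V) (S : Set V) : SimpleGraph (Option V) where
  Adj a b := match a, b with
    | some u, some v => G.Adj u v
    | some u, none => u ∈ S
    | none, some v => v ∈ S
    | none, none => False
  symm := ⟨by rintro (_ | u) (_ | v) h <;> first | exact h.elim | exact h | exact h.symm⟩
  loopless := ⟨by rintro (_ | u) h <;> simp_all⟩

/-- `P` is a circuit graph: adding an apex vertex joined to all external vertices yields a
3-connected graph. -/
def PlaneGraph.IsCircuit {V : Type*} [Fintype V] (P : PlaneGraph V) : Prop :=
  ThreeConnected (addApex P.G {v | P.External v})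

/-- A connected graph is planar iff it admits a rotation system satisfying Euler's formula. -/
def IsPlanarConn {V : Type*} [Fintype V] (G : SimpleGraph V) : Prop :=
  ∃ rot : Equiv.Perm G.Dart, (∀ d : G.Dart, (rot d).toProd.1 = d.toProd.1) ∧
    (Fintype.card V : ℤ) + Nat.card (Faces G rot) = Nat.card G.edgeSet + 2

/-- In a circuit graph, every connected component obtained by deleting a separating set of
size 2 contains an external vertex. -/
theorem circuit_graph_component_meets_outer {V : Type*} [Fintype V]
    (P : PlaneGraph V) (hcirc : P.IsCircuit) (S : Set V) (hS : S.ncard = 2)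
    (hsep : ¬ (P.G.induce (Sᶜ : Set V)).Preconnected) :
    ∀ K : (P.G.induce (Sᶜ : Set V)).ConnectedComponent,
      ∃ w : (Sᶜ : Set V), (P.G.induce (Sᶜ : Set V)).connectedComponentMk w = K ∧
        P.External (w : V) := by
  intro K
  by_contra hno
  push_neg at hno
  -- work in the apex graph minus some '' S
  set H := addApex P.G {v | P.External v} with hH
  have hS' : ((some '' S : Set (Option V))).ncard = 2 := by
    rw [Set.ncard_image_of_injective _ (Option.some_injective V), hS]
  have hconn : (H.induce ((some '' S)ᶜ : Set (Option V))).Connected :=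
    hcirc.2 _ (by rw [hS']; norm_num)
  -- membership facts
  have hnone : (none : Option V) ∈ ((some '' S)ᶜ : Set (Option V)) := by simp
  have hsome : ∀ v : V, v ∉ S → (some v : Option V) ∈ ((some '' S)ᶜ : Set (Option V)) := by
    intro v hv; simp [hv]
  -- pick a representative of K
  obtain ⟨w0, hw0⟩ := K.exists_rep
  have hw0S : (w0 : V) ∉ S := w0.2
  -- the predicate "lies in K"
  let Q : (((some '' S)ᶜ : Set (Option V))) → Prop := fun a =>
    ∃ w : (Sᶜ : Set V), (a : Option V) = some (w : V) ∧
      (P.G.induce (Sᶜ : Set V)).connectedComponentMk w = K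
  have hstep : ∀ a b : (((some '' S)ᶜ : Set (Option V))),
      (H.induce ((some '' S)ᶜ : Set (Option V))).Adj a b → Q a → Q b := by
    rintro ⟨a, ha⟩ ⟨b, hb⟩ hab ⟨w, hw, hwK⟩
    simp only at hw
    subst hw
    match b with
    | none =>
        -- w is adjacent to the apex, so external: contradiction
        exfalso
        have : P.External (w : V) := hab
        exact hno w hwK this
    | some v =>
        have hvS : v ∉ S := by
          intro hv
          exact hb ⟨v, hv, rfl⟩
        have hadj : P.G.Adj (w : V) v := hab
        refine ⟨⟨v, hvS⟩, rfl, ?_⟩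
        rw [← hwK]
        apply SimpleGraph.ConnectedComponent.sound
        exact (SimpleGraph.Adj.reachable
          (show (P.G.induce (Sᶜ : Set V)).Adj w ⟨v, hvS⟩ from hadj)).symm
  have hwalk : ∀ {a b : (((some '' S)ᶜ : Set (Option V)))},
      (H.induce ((some '' S)ᶜ : Set (Option V))).Walk a b → Q a → Q b := by
    intro a b p
    induction p with
    | nil => exact id
    | cons h _ ih => exact fun hq => ih (hstep _ _ h hq)
  obtain ⟨p⟩ := hconn.preconnected ⟨some (w0 : V), hsome _ hw0S⟩ ⟨none, hnone⟩
  obtain ⟨w, hw, -⟩ := hwalk p ⟨w0, rfl, hw0⟩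
  exact Option.some_ne_none (w : V) hw.symm
end
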